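/- arXiv:2507.14370 — 5 statements merged into one kernel-verified Lean document; each statement's English description precedes it below -/
import Mathlib

section
/- If two n-qubit permutation matrices P₁ and P₂ satisfy P₁ = G_L P₂ G_R for generalized permutation (monomial) matrices G_L, G_R in the Clifford group, then there exist permutation matrices A_L, A_R in the Clifford group (i.e., affine permutations) such that P₁ = A_L P₂ A_R. In other words, equivalence under Clifford monomial matrices coincides with affine equivalence for permutation matrices. -/
/-- Basis states of `n` qubits. -/
abbrev QState (n : ℕ) := Fin n → ZMod 2

/-- `2^n × 2^n` complex matrices, indexed by basis states of `n` qubits. -/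
abbrev QMat (n : ℕ) := Matrix (QState n) (QState n) ℂ

noncomputable section

namespace CHPaper

/-- Pauli X string: the permutation matrix adding the vector `v` (bit flips). -/
def XStr {n : ℕ} (v : QState n) : QMat n :=
  Matrix.of fun x y => if x = y + v then (1 : ℂ) else 0

/-- Pauli Z string: diagonal sign matrix determined by the vector `v`. -/
def ZStr {n : ℕ} (v : QState n) : QMat n :=
  Matrix.diagonal fun x => (-1 : ℂ) ^ (ZMod.val (∑ i, v i * x i))

/-- The `n`-qubit Pauli group (with phases that are fourth roots of unity). -/
def Pauli (n : ℕ) : Set (QMat n) :=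
  {M | ∃ (c : ℂ) (v w : QState n), c ^ 4 = 1 ∧ M = c • (XStr v * ZStr w)}

/-- The Clifford Hierarchy: level 1 is the Pauli group, and
`U ∈ CH n (k+1)` iff `U` is unitary and conjugates every Pauli into `CH n k`. -/
def CH (n : ℕ) : ℕ → Set (QMat n)
  | 0 => {1}
  | 1 => Pauli n
  | (k+2) => {U | U ∈ Matrix.unitaryGroup (QState n) ℂ ∧
      ∀ P ∈ Pauli n, U * P * star U ∈ CH n (k+1)}

/-- Membership in some finite level of the Clifford Hierarchy. -/
def InCH {n : ℕ} (M : QMat n) : Prop := ∃ k, M ∈ CH n k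

/-- The permutation matrix of a permutation of basis states. -/
def permMat {n : ℕ} (σ : Equiv.Perm (QState n)) : QMat n :=
  Matrix.of fun x y => if x = σ y then (1 : ℂ) else 0

/-- A matrix is a permutation matrix. -/
def IsPermMat {n : ℕ} (M : QMat n) : Prop :=
  ∃ σ : Equiv.Perm (QState n), M = permMat σ

/-- A monomial (generalized permutation) matrix: exactly one nonzero entry in
each row and column. -/
def IsMonomial {n : ℕ} (M : QMat n) : Prop :=
  ∃ (σ : Equiv.Perm (QState n)) (d : QState n → ℂ), (∀ x, d x ≠ 0) ∧
    M = Matrix.of fun x y => if x = σ y then d y else 0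

/-! A Clifford monomial matrix factors as `G = P_σ D` with `D` diagonal, and unitarity forces
`|D| = 1`. Conjugation by `D` fixes every `Z` string, so `P_σ` conjugates `Z_w` exactly as `G`
does. Conjugation by `G` sends `X_v` to a monomial matrix whose permutation part is
`σ ∘ (· + v) ∘ σ⁻¹`; since that image is a Pauli, this permutation is a translation, so `P_σ`
conjugates `X_v` to an `X` string. Hence `P_σ` is Clifford. Finally, monomial matrices compose
their permutation parts, so `P₁ = G_L P₂ G_R` forces `σ₁ = σ_L σ₂ σ_R`, i.e. `P₁ = P_L P₂ P_R`. -/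

open Matrix Equiv

variable {n : ℕ}

lemma permMat_mul (σ τ : Perm (QState n)) : permMat σ * permMat τ = permMat (σ * τ) := by
  ext x y
  simp [permMat, Matrix.mul_apply]
  congr -- the two sides differ only in their `Decidable` instances

lemma permMat_one : permMat (1 : Perm (QState n)) = 1 := by
  ext x y
  simp [permMat, Matrix.one_apply]
  congr

lemma star_permMat (σ : Perm (QState n)) : star (permMat σ) = permMat σ⁻¹ := by
  ext x y
  simp only [permMat, Matrix.star_apply, of_apply, Perm.eq_inv_iff_eq, eq_comm]
  split_ifs <;> simp

lemma star_permMat_mul_permMat (σ : Perm (QState n)) : star (permMat σ) * permMat σ = 1 := by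
  rw [star_permMat, permMat_mul, inv_mul_cancel, permMat_one]

lemma permMat_mem_unitaryGroup (σ : Perm (QState n)) :
    permMat σ ∈ unitaryGroup (QState n) ℂ :=
  mem_unitaryGroup_iff'.2 (star_permMat_mul_permMat σ)

lemma diagonal_mul_permMat (σ : Perm (QState n)) (d : QState n → ℂ) :
    diagonal d * permMat σ = permMat σ * diagonal (d ∘ σ) := by
  ext x y
  by_cases h : x = σ y <;> simp [diagonal_mul, mul_diagonal, permMat, h]

lemma of_ite_eq_permMat_mul_diagonal (σ : Perm (QState n)) (d : QState n → ℂ) :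
    (of fun x y => if x = σ y then d y else 0) = permMat σ * diagonal d := by
  ext x y
  simp [permMat, mul_diagonal]

lemma permMat_mul_diagonal_mul_permMat_mul_diagonal (σ τ : Perm (QState n))
    (d e : QState n → ℂ) :
    permMat σ * diagonal d * (permMat τ * diagonal e)
      = permMat (σ * τ) * diagonal (fun y => d (τ y) * e y) := by
  rw [mul_assoc, ← mul_assoc (diagonal d), diagonal_mul_permMat, mul_assoc,
    diagonal_mul_diagonal, ← mul_assoc, permMat_mul]
  rfl

lemma star_permMat_mul_diagonal (σ : Perm (QState n)) (d : QState n → ℂ) :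
    star (permMat σ * diagonal d) = permMat σ⁻¹ * diagonal (fun y => star (d (σ⁻¹ y))) := by
  rw [star_mul, star_permMat, star_eq_conjTranspose, diagonal_conjTranspose,
    diagonal_mul_permMat]
  rfl

lemma eq_of_permMat_mul_diagonal_eq {σ τ : Perm (QState n)} {e f : QState n → ℂ}
    (he : ∀ y, e y ≠ 0) (h : permMat σ * diagonal e = permMat τ * diagonal f) : σ = τ := by
  ext1 y
  by_contra hne
  have hy := congr_fun₂ h (σ y) y
  simp [permMat, mul_diagonal, hne] at hy
  exact he y hy

lemma eq_of_permMat_eq_permMat_mul_diagonal {σ τ : Perm (QState n)} {f : QState n → ℂ}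
    (h : permMat σ = permMat τ * diagonal f) : σ = τ :=
  eq_of_permMat_mul_diagonal_eq (e := 1) (fun _ => one_ne_zero) (by simpa using h)

lemma XStr_eq_permMat (v : QState n) : XStr v = permMat (Equiv.addRight v) := rfl

lemma XStr_mul_XStr (a b : QState n) : XStr a * XStr b = XStr (b + a) := by
  rw [XStr_eq_permMat, XStr_eq_permMat, XStr_eq_permMat, permMat_mul]
  congr 1
  ext1 y
  simp [add_assoc]

lemma XStr_zero : XStr (0 : QState n) = 1 := by
  rw [XStr_eq_permMat, ← permMat_one]
  congr 1
  ext1 y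
  simp

def zSign (w : QState n) : QState n → ℂ :=
  fun x => (-1 : ℂ) ^ (ZMod.val (∑ i, w i * x i))

lemma ZStr_eq_diagonal (w : QState n) : ZStr w = diagonal (zSign w) := rfl

lemma ZStr_zero : ZStr (0 : QState n) = 1 := by
  simp [ZStr]

lemma smul_XStr_mul_ZStr (c : ℂ) (v w : QState n) :
    c • (XStr v * ZStr w) = permMat (Equiv.addRight v) * diagonal (fun y => c * zSign w y) := by
  rw [XStr_eq_permMat, ZStr_eq_diagonal, ← mul_smul_comm, ← diagonal_smul]
  rfl

lemma XStr_mem_Pauli (v : QState n) : XStr v ∈ Pauli n :=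
  ⟨1, v, 0, one_pow 4, by rw [ZStr_zero, mul_one, one_smul]⟩

lemma ZStr_mem_Pauli (w : QState n) : ZStr w ∈ Pauli n :=
  ⟨1, 0, w, one_pow 4, by rw [XStr_zero, one_mul, one_smul]⟩

lemma XStr_mul_mem_Pauli (a : QState n) {Q : QMat n} (hQ : Q ∈ Pauli n) :
    XStr a * Q ∈ Pauli n := by
  obtain ⟨c, v, w, hc, rfl⟩ := hQ
  exact ⟨c, v + a, w, hc, by rw [mul_smul_comm, ← mul_assoc, XStr_mul_XStr]⟩

lemma smul_mem_Pauli {c : ℂ} (hc : c ^ 4 = 1) {Q : QMat n} (hQ : Q ∈ Pauli n) :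
    c • Q ∈ Pauli n := by
  obtain ⟨c', v, w, hc', rfl⟩ := hQ
  exact ⟨c * c', v, w, by rw [mul_pow, hc, hc', one_mul], smul_smul c c' _⟩

lemma mem_CH_two_iff (U : QMat n) :
    U ∈ CH n 2 ↔ U ∈ unitaryGroup (QState n) ℂ ∧ ∀ P ∈ Pauli n, U * P * star U ∈ Pauli n :=
  Iff.rfl

lemma permMat_mem_CH_two {σ : Perm (QState n)}
    (hX : ∀ v, ∃ a, σ * Equiv.addRight v * σ⁻¹ = Equiv.addRight a)
    (hZ : ∀ w, permMat σ * ZStr w * star (permMat σ) ∈ Pauli n) : permMat σ ∈ CH n 2 := by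
  refine ⟨permMat_mem_unitaryGroup σ, ?_⟩
  rintro _ ⟨c, v, w, hc, rfl⟩
  obtain ⟨a, ha⟩ := hX v
  have hXa : permMat σ * XStr v * star (permMat σ) = XStr a := by
    rw [XStr_eq_permMat, star_permMat, permMat_mul, permMat_mul, ha, XStr_eq_permMat]
  have hsplit : permMat σ * (XStr v * ZStr w) * star (permMat σ)
      = (permMat σ * XStr v * star (permMat σ)) * (permMat σ * ZStr w * star (permMat σ)) := by
    simp only [mul_assoc, ← mul_assoc (star (permMat σ)) (permMat σ), star_permMat_mul_permMat,
      one_mul]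
  rw [mul_smul_comm, smul_mul_assoc, hsplit, hXa]
  exact smul_mem_Pauli hc (XStr_mul_mem_Pauli a (hZ w))

lemma star_mul_self_of_permMat_mul_diagonal_mem_unitaryGroup {σ : Perm (QState n)}
    {d : QState n → ℂ} (hU : permMat σ * diagonal d ∈ unitaryGroup (QState n) ℂ) (y : QState n) :
    star (d y) * d y = 1 := by
  have hD : diagonal d ∈ unitaryGroup (QState n) ℂ := by
    simpa [← mul_assoc, permMat_mul, permMat_one] using
      mul_mem (permMat_mem_unitaryGroup σ⁻¹) hU
  have h := congr_fun₂ (mem_unitaryGroup_iff'.1 hD) y y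
  rwa [star_eq_conjTranspose, diagonal_conjTranspose, diagonal_mul_diagonal, diagonal_apply_eq,
    one_apply_eq] at h

lemma permMat_mul_diagonal_conj_permMat (σ τ : Perm (QState n)) (d : QState n → ℂ) :
    permMat σ * diagonal d * permMat τ * star (permMat σ * diagonal d)
      = permMat (σ * τ * σ⁻¹) * diagonal (fun y => d (τ (σ⁻¹ y)) * star (d (σ⁻¹ y))) := by
  have hτ : permMat τ = permMat τ * diagonal (fun _ => 1) := by rw [diagonal_one, mul_one]
  rw [hτ, permMat_mul_diagonal_mul_permMat_mul_diagonal, star_permMat_mul_diagonal,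
    permMat_mul_diagonal_mul_permMat_mul_diagonal]
  simp

lemma diagonal_conj_diagonal {ι R : Type*} [Fintype ι] [DecidableEq ι] [CommRing R]
    [StarRing R] {d : ι → R} (hd : ∀ y, star (d y) * d y = 1) (z : ι → R) :
    diagonal d * diagonal z * star (diagonal d) = diagonal z := by
  rw [star_eq_conjTranspose, diagonal_conjTranspose, diagonal_mul_diagonal, diagonal_mul_diagonal]
  congr 1
  funext y
  linear_combination z y * hd y

lemma permMat_mem_CH_two_of_permMat_mul_diagonal_mem {σ : Perm (QState n)}
    {d : QState n → ℂ} (hC : permMat σ * diagonal d ∈ CH n 2) : permMat σ ∈ CH n 2 := by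
  obtain ⟨hU, hPauli⟩ := (mem_CH_two_iff _).1 hC
  have hd := star_mul_self_of_permMat_mul_diagonal_mem_unitaryGroup hU
  have hd₀ : ∀ y, d y ≠ 0 := fun y h => by simpa [h] using hd y
  refine permMat_mem_CH_two (fun v => ?_) (fun w => ?_)
  · obtain ⟨c, a, b, -, hG⟩ := hPauli (XStr v) (XStr_mem_Pauli v)
    rw [XStr_eq_permMat, permMat_mul_diagonal_conj_permMat, smul_XStr_mul_ZStr] at hG
    exact ⟨a, eq_of_permMat_mul_diagonal_eq
      (fun y => mul_ne_zero (hd₀ _) (star_ne_zero.2 (hd₀ _))) hG⟩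
  · convert hPauli (ZStr w) (ZStr_mem_Pauli w) using 1
    conv_lhs => rw [ZStr_eq_diagonal, ← diagonal_conj_diagonal hd (zSign w)]
    simp only [star_mul, mul_assoc, ZStr_eq_diagonal]

/-- If two permutation matrices are related by left/right
multiplication by Clifford monomial matrices, then they are related by
left/right multiplication by Clifford permutation matrices (affine
permutations). -/
theorem clifford_monomial_equiv_implies_affine_equiv {n : ℕ}
    (P₁ P₂ G_L G_R : QMat n)
    (hP₁ : IsPermMat P₁) (hP₂ : IsPermMat P₂)
    (hGL : IsMonomial G_L) (hGLC : G_L ∈ CH n 2)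
    (hGR : IsMonomial G_R) (hGRC : G_R ∈ CH n 2)
    (heq : P₁ = G_L * P₂ * G_R) :
    ∃ A_L A_R : QMat n,
      IsPermMat A_L ∧ A_L ∈ CH n 2 ∧ IsPermMat A_R ∧ A_R ∈ CH n 2 ∧
      P₁ = A_L * P₂ * A_R := by
  obtain ⟨σ₁, rfl⟩ := hP₁
  obtain ⟨σ₂, rfl⟩ := hP₂
  obtain ⟨σL, dL, -, rfl⟩ := hGL
  obtain ⟨σR, dR, -, rfl⟩ := hGR
  simp only [of_ite_eq_permMat_mul_diagonal] at hGLC hGRC heq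
  have hσ : σ₁ = σL * σ₂ * σR := by
    rw [mul_assoc (permMat σL), diagonal_mul_permMat, ← mul_assoc (permMat σL), permMat_mul,
      permMat_mul_diagonal_mul_permMat_mul_diagonal] at heq
    exact eq_of_permMat_eq_permMat_mul_diagonal heq
  refine ⟨permMat σL, permMat σR, ⟨σL, rfl⟩, permMat_mem_CH_two_of_permMat_mul_diagonal_mem hGLC,
    ⟨σR, rfl⟩, permMat_mem_CH_two_of_permMat_mul_diagonal_mem hGRC, ?_⟩
  rw [permMat_mul, permMat_mul, hσ]

end CHPaper
end
end

section
/- The order of the group 𝒟ₖⁿ of n-qubit diagonal gates at level k of the Clifford Hierarchy equals ∏_{j=0}^{min(k-1,n-1)} (2^{k-j})^{C(n, j+1)}, where C(n,m) is the binomial coefficient. -/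
noncomputable section

namespace CHPaper

/-- The multi-controlled phase gate Λ^{|S|-1}(Z^{1/2^l}): applies the phase
exp(iπ/2^l) to basis states that are 1 on every qubit in S. -/
def MCphase {n : ℕ} (S : Finset (Fin n)) (l : ℕ) : QMat n :=
  Matrix.diagonal fun x =>
    if ∀ i ∈ S, x i = 1 then
      Complex.exp (Complex.I * (Real.pi : ℂ) / 2 ^ l) else 1

/-- Generating set of 𝒟ₖⁿ: multi-controlled phase gates Λ^m(Z^{1/2^l}) with
l + m + 1 = l + |S| ≤ k (such a gate lies in level l + |S| of the Clifford
Hierarchy). -/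
def DGen (n k : ℕ) : Set (QMat n) :=
  {M | ∃ (S : Finset (Fin n)) (l : ℕ), S.Nonempty ∧ l + S.card ≤ k ∧
    M = MCphase S l}

/-- 𝒟ₖⁿ, the group of n-qubit diagonal gates at level k of the Clifford
Hierarchy, generated by the multi-controlled phase gates (all generators have
finite order, so the monoid closure is a group). -/
def DGroup (n k : ℕ) : Set (QMat n) :=
  (Submonoid.closure (DGen n k) : Submonoid (QMat n))

/-! With `ζ = exp (2πi / 2^(k+1))`, the gate `Λᵐ(Z^{1/2^l})` on the qubits `S` is the diagonal
matrix `ζ^(2^(k-l) x_S)`, where `x_S = ∏_{i ∈ S} x_i`. Since `x ↦ ζ^x` is injective on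
`ℤ/2^(k+1)`, `𝒟ₖⁿ` is isomorphic to the additive monoid of phase functions
`𝔽₂ⁿ → ℤ/2^(k+1)` generated by the `2^(k-l) x_S`, which is generated by the `2^|S| x_S` alone.
These have additive order `2^(k+1-|S|)` and are independent: a vanishing combination
`∑ c_S 2^|S| x_S`, evaluated at the indicator vector of `T`, only involves the `S ⊆ T`, so by
induction on `T` every `c_S` vanishes modulo `2^(k+1-|S|)`. Hence `|𝒟ₖⁿ| = ∏_S 2^(k+1-|S|)`
over the nonempty `S` with `|S| ≤ k`, and grouping the `S` by size gives the formula. -/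

open Finset

section phaseDiag

variable {n N : ℕ} [NeZero N]

def phaseDiag (f : QState n → ZMod N) : QMat n :=
  Matrix.diagonal fun x => ZMod.stdAddChar (f x)

lemma phaseDiag_zero : phaseDiag (0 : QState n → ZMod N) = 1 := by
  simp [phaseDiag]

lemma phaseDiag_add (f g : QState n → ZMod N) :
    phaseDiag (f + g) = phaseDiag f * phaseDiag g := by
  simp [phaseDiag, Matrix.diagonal_mul_diagonal, AddChar.map_add_eq_mul]

lemma phaseDiag_injective : Function.Injective (phaseDiag : (QState n → ZMod N) → QMat n) :=
  fun _ _ h => funext fun x =>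
    ZMod.injective_stdAddChar (congrFun (Matrix.diagonal_injective h) x)

lemma closure_image_phaseDiag (s : Set (QState n → ZMod N)) :
    (Submonoid.closure (phaseDiag '' s) : Set (QMat n)) =
      phaseDiag '' (AddSubmonoid.closure s : Set (QState n → ZMod N)) := by
  apply subset_antisymm
  · intro M hM
    induction hM using Submonoid.closure_induction with
    | mem M hM => exact Set.image_mono AddSubmonoid.subset_closure hM
    | one => exact ⟨0, zero_mem _, phaseDiag_zero⟩
    | mul M M' _ _ hM hM' =>
      obtain ⟨f, hf, rfl⟩ := hM
      obtain ⟨g, hg, rfl⟩ := hM'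
      exact ⟨f + g, add_mem hf hg, phaseDiag_add f g⟩
  · rintro _ ⟨f, hf, rfl⟩
    induction hf using AddSubmonoid.closure_induction with
    | mem f hf => exact Submonoid.subset_closure (Set.mem_image_of_mem _ hf)
    | zero => rw [phaseDiag_zero]; exact one_mem _
    | add f g _ _ hf hg => rw [phaseDiag_add]; exact mul_mem hf hg

end phaseDiag

def bitMonomial {n : ℕ} {R : Type*} [Zero R] [One R] (S : Finset (Fin n)) (x : QState n) : R :=
  if ∀ i ∈ S, x i = 1 then 1 else 0

lemma bitMonomial_indicator {n : ℕ} {R : Type*} [Zero R] [One R] (S T : Finset (Fin n)) :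
    bitMonomial S (fun i => if i ∈ T then 1 else 0) = (if S ⊆ T then 1 else 0 : R) := by
  refine if_congr ⟨fun h i hi => ?_, fun h i hi => if_pos (h hi)⟩ rfl rfl
  by_contra hiT
  simpa [if_neg hiT] using h i hi

lemma exp_eq_stdAddChar {k l : ℕ} (hl : l ≤ k) :
    Complex.exp (Complex.I * Real.pi / 2 ^ l) =
      ZMod.stdAddChar ((2 ^ (k - l) : ℕ) : ZMod (2 ^ (k + 1))) := by
  rw [ZMod.stdAddChar_apply, ZMod.toCircle_natCast]
  congr 1
  have hk : (2 : ℂ) ^ (k + 1) = 2 ^ (k - l) * 2 ^ l * 2 := by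
    rw [← pow_add, ← pow_succ, Nat.sub_add_cancel hl]
  push_cast
  rw [hk]
  field_simp

lemma MCphase_eq_phaseDiag {n k l : ℕ} (S : Finset (Fin n)) (hl : l ≤ k) :
    MCphase S l = phaseDiag (2 ^ (k - l) • bitMonomial S : QState n → ZMod (2 ^ (k + 1))) := by
  refine congrArg Matrix.diagonal (funext fun x => ?_)
  by_cases hx : ∀ i ∈ S, x i = 1
  · simp only [Pi.smul_apply, bitMonomial, if_pos hx, nsmul_eq_mul, mul_one]
    exact exp_eq_stdAddChar hl
  · simp only [Pi.smul_apply, bitMonomial, if_neg hx, smul_zero, AddChar.map_zero_eq_one]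

def phaseGen (n k : ℕ) : Set (QState n → ZMod (2 ^ (k + 1))) :=
  {f | ∃ (S : Finset (Fin n)) (l : ℕ), S.Nonempty ∧ l + S.card ≤ k ∧
    f = 2 ^ (k - l) • bitMonomial S}

lemma DGen_eq_image_phaseGen (n k : ℕ) : DGen n k = phaseDiag '' phaseGen n k := by
  ext M
  constructor
  · rintro ⟨S, l, hS, hl, rfl⟩
    exact ⟨_, ⟨S, l, hS, hl, rfl⟩, (MCphase_eq_phaseDiag S (by omega)).symm⟩
  · rintro ⟨_, ⟨S, l, hS, hl, rfl⟩, rfl⟩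
    exact ⟨S, l, hS, hl, (MCphase_eq_phaseDiag S (by omega)).symm⟩

lemma DGroup_eq_image_closure_phaseGen (n k : ℕ) :
    DGroup n k =
      phaseDiag '' (AddSubmonoid.closure (phaseGen n k) : Set (QState n → ZMod (2 ^ (k + 1)))) := by
  rw [DGroup, DGen_eq_image_phaseGen, closure_image_phaseDiag]

lemma eq_zero_of_natCast_mul_two_pow_eq_zero {a s k : ℕ} (ha : a < 2 ^ (k + 1 - s))
    (hs : s ≤ k + 1) (h : (a : ZMod (2 ^ (k + 1))) * 2 ^ s = 0) : a = 0 := by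
  replace h : ((a * 2 ^ s : ℕ) : ZMod (2 ^ (k + 1))) = 0 := by push_cast; exact h
  rw [ZMod.natCast_eq_zero_iff, ← Nat.sub_add_cancel hs, pow_add] at h
  exact Nat.eq_zero_of_dvd_of_lt (Nat.dvd_of_mul_dvd_mul_right (by positivity) h) ha

section phaseCoeffs

variable {n k : ℕ}

abbrev PhaseIndex (n k : ℕ) := {S : Finset (Fin n) // S.Nonempty ∧ S.card ≤ k}

/-- The coefficient of `scaledMonomial k S` only matters modulo `2 ^ (k + 1 - |S|)`, the
additive order of `scaledMonomial k S`. -/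
abbrev PhaseCoeffs (n k : ℕ) := ∀ S : PhaseIndex n k, Fin (2 ^ (k + 1 - S.1.card))

def scaledMonomial (k : ℕ) (S : Finset (Fin n)) : QState n → ZMod (2 ^ (k + 1)) :=
  2 ^ S.card • bitMonomial S

lemma two_pow_sub_nsmul_scaledMonomial {S : Finset (Fin n)} (hS : S.card ≤ k) :
    2 ^ (k + 1 - S.card) • scaledMonomial k S = 0 := by
  rw [scaledMonomial, smul_smul, ← pow_add, Nat.sub_add_cancel (by omega)]
  funext x
  rw [Pi.smul_apply, nsmul_eq_mul, ZMod.natCast_self, zero_mul, Pi.zero_apply]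

lemma scaledMonomial_mem_phaseGen (S : PhaseIndex n k) : scaledMonomial k S.1 ∈ phaseGen n k :=
  ⟨S.1, k - S.1.card, S.2.1, by omega, by rw [scaledMonomial, Nat.sub_sub_self S.2.2]⟩

def phaseOfCoeffs (n k : ℕ) : PhaseCoeffs n k →+ (QState n → ZMod (2 ^ (k + 1))) where
  toFun c := ∑ S, (c S : ℕ) • scaledMonomial k S.1
  map_zero' := by simp
  map_add' c d := by
    rw [← sum_add_distrib]
    refine sum_congr rfl fun S _ => ?_
    rw [Pi.add_apply, Fin.val_add,
      ← nsmul_eq_mod_nsmul _ (two_pow_sub_nsmul_scaledMonomial S.2.2), add_nsmul]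

lemma phaseOfCoeffs_apply (c : PhaseCoeffs n k) :
    phaseOfCoeffs n k c = ∑ S, (c S : ℕ) • scaledMonomial k S.1 :=
  rfl

lemma scaledMonomial_mem_mrange (S : PhaseIndex n k) :
    scaledMonomial k S.1 ∈ AddMonoidHom.mrange (phaseOfCoeffs n k) := by
  refine ⟨Pi.single S ⟨1, Nat.one_lt_two_pow (by omega)⟩, ?_⟩
  rw [phaseOfCoeffs_apply, sum_eq_single S]
  · simp
  · intro T _ hT
    simp [Pi.single_eq_of_ne hT]
  · simp

lemma mrange_phaseOfCoeffs :
    AddMonoidHom.mrange (phaseOfCoeffs n k) = AddSubmonoid.closure (phaseGen n k) := by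
  apply le_antisymm
  · rintro _ ⟨c, rfl⟩
    rw [phaseOfCoeffs_apply]
    exact sum_mem fun S _ =>
      nsmul_mem (AddSubmonoid.subset_closure (scaledMonomial_mem_phaseGen S)) _
  · rw [AddSubmonoid.closure_le]
    rintro _ ⟨S, l, hS, hl, rfl⟩
    have h : 2 ^ (k - l) • bitMonomial S = 2 ^ (k - l - S.card) • scaledMonomial k S := by
      rw [scaledMonomial, smul_smul, ← pow_add, Nat.sub_add_cancel (by omega)]
    rw [h]
    exact nsmul_mem (scaledMonomial_mem_mrange ⟨S, hS, by omega⟩) _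

lemma phaseOfCoeffs_apply_indicator (c : PhaseCoeffs n k) (T : Finset (Fin n)) :
    phaseOfCoeffs n k c (fun i => if i ∈ T then 1 else 0) =
      ∑ S, if S.1 ⊆ T then ((c S : ℕ) : ZMod (2 ^ (k + 1))) * 2 ^ S.1.card else 0 := by
  rw [phaseOfCoeffs_apply, Finset.sum_apply]
  refine sum_congr rfl fun S _ => ?_
  rw [Pi.smul_apply, scaledMonomial, Pi.smul_apply, bitMonomial_indicator]
  split_ifs <;> simp [nsmul_eq_mul, mul_comm]

lemma phaseOfCoeffs_injective : Function.Injective (phaseOfCoeffs n k) := by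
  refine (injective_iff_map_eq_zero _).mpr fun c hc => funext fun S => Fin.ext ?_
  suffices h : ∀ (T : Finset (Fin n)) (hT : T.Nonempty ∧ T.card ≤ k), (c ⟨T, hT⟩ : ℕ) = 0 from
    h S.1 S.2
  intro T
  induction T using Finset.strongInduction with
  | H T ih =>
    intro hT
    have hsum := congrFun hc (fun i => if i ∈ T then 1 else 0)
    rw [phaseOfCoeffs_apply_indicator, sum_eq_single ⟨T, hT⟩, if_pos subset_rfl] at hsum
    · exact eq_zero_of_natCast_mul_two_pow_eq_zero (c _).2 (Nat.le_succ_of_le hT.2) hsum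
    · intro S _ hST
      split_ifs with hsub
      · rw [ih S.1 (ssubset_of_subset_of_ne hsub (Subtype.coe_ne_coe.mpr hST)) S.2]
        simp
      · rfl
    · simp

end phaseCoeffs

lemma card_phaseCoeffs (n k : ℕ) :
    Nat.card (PhaseCoeffs n k) = ∏ j ∈ range (min k n), (2 ^ (k - j)) ^ n.choose (j + 1) := by
  rw [Nat.card_pi]
  simp only [Nat.card_eq_fintype_card, Fintype.card_fin]
  rw [← prod_subtype ({S | S.Nonempty ∧ S.card ≤ k} : Finset (Finset (Fin n))) (by simp)
    (fun S => 2 ^ (k + 1 - S.card))]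
  have hcard : ∀ S ∈ ({S | S.Nonempty ∧ S.card ≤ k} : Finset (Finset (Fin n))),
      S.card - 1 ∈ range (min k n) := by
    intro S hS
    rw [mem_filter, ← card_pos] at hS
    have hn := (card_le_univ S).trans_eq (Fintype.card_fin n)
    rw [mem_range]
    omega
  rw [← prod_fiberwise_of_maps_to hcard]
  refine prod_congr rfl fun j hj => ?_
  rw [mem_range] at hj
  have hfiber : ({S ∈ {S | S.Nonempty ∧ S.card ≤ k} | S.card - 1 = j} : Finset (Finset (Fin n)))
      = powersetCard (j + 1) univ := by
    ext S
    rw [mem_filter, mem_filter, mem_powersetCard_univ, ← card_pos]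
    simp only [mem_univ, true_and]
    omega
  have hexp : ∀ S ∈ powersetCard (j + 1) (univ : Finset (Fin n)),
      2 ^ (k + 1 - S.card) = 2 ^ (k - j) := by
    intro S hS
    rw [mem_powersetCard_univ.mp hS, Nat.add_sub_add_right]
  rw [hfiber, prod_congr rfl hexp, prod_const, card_powersetCard, card_fin]

/-- the order of 𝒟ₖⁿ equals
∏_{j=0}^{min(k-1,n-1)} (2^{k-j})^{C(n,j+1)}. -/
theorem card_DGroup (n k : ℕ) :
    (DGroup n k).ncard =
      ∏ j ∈ Finset.range (min k n), (2 ^ (k - j)) ^ (n.choose (j + 1)) := by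
  rw [DGroup_eq_image_closure_phaseGen, Set.ncard_image_of_injective _ phaseDiag_injective,
    ← mrange_phaseOfCoeffs, AddMonoidHom.coe_mrange,
    Set.ncard_range_of_injective phaseOfCoeffs_injective, card_phaseCoeffs]
end CHPaper
end
end

section
/- For every n and k, the chain of inclusions 𝒟ₖⁿ ⊆ Diagₖⁿ ⊆ 𝒟_{k+n}ⁿ ⊆ Diag_{k+n}ⁿ holds; in particular every 2ⁿ×2ⁿ diagonal matrix with 2ᵏ-th root-of-unity entries lies in the group of diagonal gates at level k+n of the Clifford Hierarchy. -/
noncomputable section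

namespace CHPaper

/-- Diag_r^n: diagonal matrices (top-left entry normalized to 1) whose entries
are 2^r-th roots of unity. -/
def Diagset (n r : ℕ) : Set (QMat n) :=
  {M | M.IsDiag ∧ M 0 0 = 1 ∧ ∀ x : QState n, (M x x) ^ (2 ^ r) = 1}
/-! Every generator `Λ^m(Z^{1/2^l})` with `l + m + 1 ≤ r` has entries that are `2^{l+1}`-th,
hence `2^r`-th, roots of unity, and such diagonal matrices are closed under products; this gives
`𝒟_rⁿ ⊆ Diag_rⁿ`. Conversely, for `M ∈ Diagₖⁿ` let `g S` be its entry at the basis state whose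
support is `S`. Möbius inversion on the lattice of subsets yields `2^k`-th roots of unity `c T`
with `g S = ∏_{T ⊆ S} c T` and `c ∅ = g ∅ = 1`, so `M = ∏_{T ≠ ∅} Λ^{|T|-1}(c T)`. Each `c T` is
a power of the primitive `2^k`-th root `exp(iπ/2^{k-1})` (or `1` when `k = 0`), so each factor
is a power of a generator of level `k - 1 + |T| ≤ k + n`. -/

end CHPaper

namespace Finset

variable {α G : Type*} [DecidableEq α] [CommGroup G]

def moebiusTransform (g : Finset α → G) (S : Finset α) : G :=
  g S / ∏ T ∈ S.ssubsets.attach, moebiusTransform g T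
termination_by S.card
decreasing_by exact card_lt_card (mem_ssubsets.mp T.2)

theorem prod_powerset_moebiusTransform (g : Finset α → G) (S : Finset α) :
    ∏ T ∈ S.powerset, moebiusTransform g T = g S := by
  rw [← mul_prod_erase _ _ (mem_powerset_self S), moebiusTransform, prod_attach, ← ssubsets,
    div_mul_cancel]

end Finset

namespace Matrix

variable {m α : Type*} [Fintype m] [DecidableEq m]

theorem IsDiag.mul_eq_diagonal [NonUnitalNonAssocSemiring α] {A B : Matrix m m α}
    (hA : A.IsDiag) (hB : B.IsDiag) : A * B = diagonal fun x => A x x * B x x := by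
  conv_lhs => rw [← hA.diagonal_diag, ← hB.diagonal_diag]
  exact diagonal_mul_diagonal _ _

theorem diagonal_prod_mem {ι : Type*} [CommSemiring α] (P : Submonoid (Matrix m m α))
    (s : Finset ι) (d : ι → m → α) (h : ∀ i ∈ s, diagonal (d i) ∈ P) :
    diagonal (∏ i ∈ s, d i) ∈ P :=
  Finset.prod_induction d (fun e => diagonal e ∈ P)
    (fun a b ha hb => by rw [Pi.mul_def, ← diagonal_mul_diagonal]; exact P.mul_mem ha hb)
    (by rw [Pi.one_def, diagonal_one]; exact P.one_mem) h

end Matrix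

theorem Complex.isPrimitiveRoot_exp_I_mul_pi_div_two_pow (l : ℕ) :
    IsPrimitiveRoot (exp (I * Real.pi / 2 ^ l)) (2 ^ (l + 1)) := by
  convert isPrimitiveRoot_exp (2 ^ (l + 1)) (by positivity) using 2
  push_cast
  rw [pow_succ]
  field_simp

namespace CHPaper

open Matrix

def diagsetSubmonoid (n r : ℕ) : Submonoid (QMat n) where
  carrier := Diagset n r
  one_mem' := ⟨isDiag_one, one_apply_eq 0, fun x => by rw [one_apply_eq, one_pow]⟩
  mul_mem' := by
    rintro A B ⟨hA, hA0, hAr⟩ ⟨hB, hB0, hBr⟩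
    rw [hA.mul_eq_diagonal hB]
    refine ⟨isDiag_diagonal _, ?_, fun x => ?_⟩
    · rw [diagonal_apply_eq, hA0, hB0, one_mul]
    · rw [diagonal_apply_eq, mul_pow, hAr, hBr, one_mul]

theorem MCphase_mem_Diagset {n r l : ℕ} {S : Finset (Fin n)} (hS : S.Nonempty)
    (hr : l + S.card ≤ r) : MCphase S l ∈ Diagset n r := by
  obtain ⟨i, hi⟩ := hS
  refine ⟨isDiag_diagonal _, ?_, fun x => ?_⟩
  · rw [MCphase, diagonal_apply_eq, if_neg fun h => zero_ne_one (h i hi)]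
  · rw [MCphase, diagonal_apply_eq]
    split_ifs
    · refine ((Complex.isPrimitiveRoot_exp_I_mul_pi_div_two_pow l).pow_eq_one_iff_dvd _).mpr
        (pow_dvd_pow 2 ?_)
      have := Finset.card_pos.mpr ⟨i, hi⟩
      omega
    · exact one_pow _

theorem DGroup_subset_Diagset (n r : ℕ) : DGroup n r ⊆ Diagset n r :=
  Submonoid.closure_le (S := diagsetSubmonoid n r)
    |>.mpr fun _ ⟨_, _, hS, hr, hM⟩ => hM ▸ MCphase_mem_Diagset hS hr

/-- `Λ^{|S|-1}(u)`; `MCphase S l` is `phaseGate S (exp (iπ/2^l))` by definition. -/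
def phaseGate {n : ℕ} (S : Finset (Fin n)) (u : ℂ) : QMat n :=
  diagonal fun x => if ∀ i ∈ S, x i = 1 then u else 1

theorem phaseGate_one {n : ℕ} (S : Finset (Fin n)) : phaseGate S 1 = 1 := by
  simp [phaseGate]

theorem phaseGate_pow {n : ℕ} (S : Finset (Fin n)) (u : ℂ) (m : ℕ) :
    phaseGate S u ^ m = phaseGate S (u ^ m) := by
  simp only [phaseGate, diagonal_pow, Pi.pow_def, ite_pow, one_pow]

theorem phaseGate_mem_DGroup {n k r : ℕ} {S : Finset (Fin n)} (hS : S.Nonempty)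
    (hr : k + S.card ≤ r + 1) {u : ℂ} (hu : u ^ 2 ^ k = 1) : phaseGate S u ∈ DGroup n r := by
  cases k with
  | zero =>
    rw [pow_zero, pow_one] at hu
    rw [hu, phaseGate_one]
    exact Submonoid.one_mem _
  | succ l =>
    obtain ⟨m, -, rfl⟩ :=
      (Complex.isPrimitiveRoot_exp_I_mul_pi_div_two_pow l).eq_pow_of_pow_eq_one hu
    rw [← phaseGate_pow]
    have hgen : phaseGate S _ ∈ DGen n r := ⟨S, l, hS, by omega, rfl⟩
    exact Submonoid.pow_mem _ (Submonoid.subset_closure hgen) m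

def ones {n : ℕ} (x : QState n) : Finset (Fin n) :=
  Finset.univ.filter fun i => x i = 1

def indicatorState {n : ℕ} (S : Finset (Fin n)) : QState n :=
  fun i => if i ∈ S then 1 else 0

theorem subset_ones_iff {n : ℕ} {S : Finset (Fin n)} {x : QState n} :
    S ⊆ ones x ↔ ∀ i ∈ S, x i = 1 := by
  simp [ones, Finset.subset_iff]

theorem indicatorState_ones {n : ℕ} (x : QState n) : indicatorState (ones x) = x := by
  funext i
  have hbit : ∀ b : ZMod 2, b = 0 ∨ b = 1 := by decide
  rcases hbit (x i) with h | h <;> simp [indicatorState, ones, h]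

theorem indicatorState_empty {n : ℕ} : indicatorState (∅ : Finset (Fin n)) = 0 := by
  funext i
  simp [indicatorState]

theorem eq_diagonal_prod_of_prod_powerset {n : ℕ} {M : QMat n} (hM : M.IsDiag)
    {c : Finset (Fin n) → ℂ}
    (hc : ∀ S, ∏ T ∈ S.powerset, c T = M (indicatorState S) (indicatorState S)) :
    M = diagonal (∏ S, fun x => if ∀ i ∈ S, x i = 1 then c S else 1) := by
  rw [← hM.diagonal_diag]
  congr 1
  funext x
  have hfilter : Finset.univ.filter (· ⊆ ones x) = (ones x).powerset := by
    ext T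
    simp
  simp_rw [Finset.prod_apply, ← subset_ones_iff, Finset.prod_ite, Finset.prod_const_one, mul_one,
    hfilter, hc, indicatorState_ones, diag_apply]

theorem Diagset_subset_DGroup (n k : ℕ) : Diagset n k ⊆ DGroup n (k + n) := by
  rintro M ⟨hM, hM0, hMk⟩
  let g (S : Finset (Fin n)) : rootsOfUnity (2 ^ k) ℂ :=
    rootsOfUnity.mkOfPowEq (M (indicatorState S) (indicatorState S)) (hMk _)
  let μ := Finset.moebiusTransform g
  let c (S : Finset (Fin n)) : ℂ := ((μ S : ℂˣ) : ℂ)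
  have hc : ∀ S, ∏ T ∈ S.powerset, c T = M (indicatorState S) (indicatorState S) := by
    intro S
    rw [← Units.coe_prod, ← Subgroup.val_finsetProd, Finset.prod_powerset_moebiusTransform]
    rfl
  rw [eq_diagonal_prod_of_prod_powerset hM hc]
  refine diagonal_prod_mem _ _ _ fun S _ => ?_
  change phaseGate S (c S) ∈ DGroup n (k + n)
  rcases S.eq_empty_or_nonempty with rfl | hS
  · have hc0 : c ∅ = 1 := by simpa [indicatorState_empty, hM0] using hc ∅
    rw [hc0, phaseGate_one]
    exact Submonoid.one_mem _
  · have hcS : c S ^ 2 ^ k = 1 := by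
      rw [← Units.val_pow_eq_pow_val, (mem_rootsOfUnity _ _).mp (μ S).prop, Units.val_one]
    have hcard : S.card ≤ n := by simpa using S.card_le_univ
    exact phaseGate_mem_DGroup hS (by omega) hcS

/-- the chain of inclusions
𝒟ₖⁿ ⊆ Diagₖⁿ ⊆ 𝒟_{k+n}ⁿ ⊆ Diag_{k+n}ⁿ. -/
theorem DGroup_Diagset_chain (n k : ℕ) :
    DGroup n k ⊆ Diagset n k ∧
    Diagset n k ⊆ DGroup n (k + n) ∧
    DGroup n (k + n) ⊆ Diagset n (k + n) :=
  ⟨DGroup_subset_Diagset n k, Diagset_subset_DGroup n k, DGroup_subset_Diagset n (k + n)⟩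

end CHPaper
end
end

section
/- For every k, there are only finitely many affine equivalence classes of permutations of F₂ᵐ whose non-fixed points form a single cycle of length k, uniformly in m; moreover for m > k, every such permutation is affine-equivalent to a gate obtained by adding controls to a representative from a fixed finite set 𝒜ₖ of permutations determined by r × k binary matrices with r ≤ k. -/
/-- Basis states of m qubits. -/
abbrev QS (m : ℕ) := Fin m → ZMod 2

/-- An affine permutation of F₂ᵐ: an invertible linear map plus a translation
(implemented by CNOTs and Pauli X gates). -/
def IsAffinePerm {m : ℕ} (f : Equiv.Perm (QS m)) : Prop :=
  ∃ (L : QS m ≃ₗ[ZMod 2] QS m) (b : QS m), ∀ x, f x = L x + b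

/-- Affine equivalence of permutations: p = f * q * g for affine f, g. -/
def AffEquiv {m : ℕ} (p q : Equiv.Perm (QS m)) : Prop :=
  ∃ f g : Equiv.Perm (QS m), IsAffinePerm f ∧ IsAffinePerm g ∧ p = f * q * g

/-!
The non-fixed points of `p` span a linear subspace `W` of dimension at most `k`. A linear
automorphism `L` carries `W` into any prescribed subspace `U` with `dim W ≤ dim U`, and
conjugating `p` by the affine map `x ↦ L x + t` is an affine equivalence which moves the support
of `p` into `t + U`. With `U` spanned by the first `min k m` coordinate vectors and `t = 0`, every
such `p` becomes a permutation of the same `2 ^ min k m ≤ 2 ^ k` points, which leaves at most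
`(2 ^ k)!` representatives. When `k < m`, `U` can avoid a coordinate `j`, and `t = e_j` puts the
support inside `{x | x j = 1}`, so the representative acts trivially wherever `x j = 0`.
-/

open Module Submodule Equiv

theorem LinearMap.exists_linearEquiv_extend {K V : Type*} [DivisionRing K] [AddCommGroup V]
    [Module K V] [FiniteDimensional K V] {W : Submodule K V} (φ : W →ₗ[K] V)
    (hφ : Function.Injective φ) : ∃ L : V ≃ₗ[K] V, ∀ w : W, L w = φ w := by
  obtain ⟨W', hW'⟩ := W.exists_isCompl
  obtain ⟨R', hR'⟩ := (LinearMap.range φ).exists_isCompl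
  let e : W ≃ₗ[K] LinearMap.range φ := LinearEquiv.ofInjective φ hφ
  have hdim : finrank K W' = finrank K R' := by
    have := finrank_add_eq_of_isCompl hW'
    have := finrank_add_eq_of_isCompl hR'
    have := e.finrank_eq
    omega
  refine ⟨(prodEquivOfIsCompl W W' hW').symm ≪≫ₗ
      (e.prodCongr (LinearEquiv.ofFinrankEq _ _ hdim)) ≪≫ₗ prodEquivOfIsCompl _ R' hR',
    fun w => ?_⟩
  simp [e]

theorem Submodule.exists_linearEquiv_map_le {K V : Type*} [DivisionRing K] [AddCommGroup V]
    [Module K V] [FiniteDimensional K V] {W U : Submodule K V}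
    (h : finrank K W ≤ finrank K U) : ∃ L : V ≃ₗ[K] V, W.map (L : V →ₗ[K] V) ≤ U := by
  obtain ⟨ψ, hψ⟩ := finrank_le_iff_exists_linearMap.mp h
  obtain ⟨L, hL⟩ := (U.subtype ∘ₗ ψ).exists_linearEquiv_extend (U.injective_subtype.comp hψ)
  refine ⟨L, ?_⟩
  rintro _ ⟨w, hw, rfl⟩
  simp [hL ⟨w, hw⟩]

theorem finrank_span_basisFun_comp {R ι κ : Type*} [CommRing R] [Nontrivial R]
    [StrongRankCondition R] [Fintype ι] [Fintype κ] [DecidableEq ι] {g : κ → ι}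
    (hg : Function.Injective g) :
    finrank R (span R (Set.range (Pi.basisFun R ι ∘ g))) = Fintype.card κ :=
  finrank_span_eq_card ((Pi.basisFun R ι).linearIndependent.comp g hg)

theorem apply_eq_zero_of_mem_span_basisFun_comp {R ι κ : Type*} [CommRing R] [Finite ι]
    [DecidableEq ι] {g : κ → ι} {x : ι → R} (hx : x ∈ span R (Set.range (Pi.basisFun R ι ∘ g)))
    {j : ι} (hj : j ∉ Set.range g) : x j = 0 := by
  refine (span_le (p := LinearMap.ker (LinearMap.proj j)) |>.mpr ?_) hx
  rintro _ ⟨i, rfl⟩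
  simp only [Function.comp_apply, Pi.basisFun_apply, SetLike.mem_coe, LinearMap.mem_ker,
    LinearMap.proj_apply]
  exact Pi.single_eq_of_ne (fun h => hj ⟨i, h.symm⟩) 1

theorem Equiv.Perm.exists_finset_supported_card_le {α : Type*} [Fintype α] [DecidableEq α]
    (p : α → Prop) [DecidablePred p] :
    ∃ S : Finset (Perm α), S.card ≤ (Fintype.card (Subtype p)).factorial ∧
      ∀ q : Perm α, (∀ x ∈ q.support, p x) → q ∈ S := by
  let ofSubtype : Perm (Subtype p) ↪ Perm α := ⟨Perm.ofSubtype, Perm.ofSubtype_injective⟩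
  refine ⟨Finset.univ.map ofSubtype, by simp [Fintype.card_perm], fun q hq => ?_⟩
  obtain ⟨r, rfl⟩ := Perm.mem_range_ofSubtype_iff.mpr (fun x hx => hq x hx)
  exact Finset.mem_map_of_mem ofSubtype (Finset.mem_univ r)

variable {m : ℕ}

theorem IsAffinePerm.inv {f : Perm (QS m)} (hf : IsAffinePerm f) : IsAffinePerm f⁻¹ := by
  obtain ⟨L, b, hfL⟩ := hf
  refine ⟨L.symm, -L.symm b, fun x => Perm.inv_eq_iff_eq.mpr ?_⟩
  simp [hfL]

theorem AffEquiv.conj (p : Perm (QS m)) {A : Perm (QS m)} (hA : IsAffinePerm A) :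
    AffEquiv p (A * p * A⁻¹) :=
  ⟨A⁻¹, A, hA.inv, hA, by group⟩

theorem exists_affEquiv_support_sub_mem (p : Perm (QS m)) {U : Submodule (ZMod 2) (QS m)}
    (hU : finrank (ZMod 2) (span (ZMod 2) (p.support : Set (QS m))) ≤ finrank (ZMod 2) U)
    (t : QS m) : ∃ q : Perm (QS m), AffEquiv p q ∧ ∀ x ∈ q.support, x - t ∈ U := by
  obtain ⟨L, hL⟩ := exists_linearEquiv_map_le hU
  let A : Perm (QS m) := L.toEquiv.trans (Equiv.addRight t)
  refine ⟨A * p * A⁻¹, AffEquiv.conj p ⟨L, t, fun _ => rfl⟩, fun x hx => ?_⟩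
  rw [Perm.support_conj, Finset.mem_map_equiv] at hx
  have hAx : x = L (A.symm x) + t := (A.apply_symm_apply x).symm
  rw [hAx, add_sub_cancel_right]
  exact hL (mem_map_of_mem (subset_span hx))

theorem exists_finset_forall_affEquiv_of_card_support_le (k m : ℕ) :
    ∃ S : Finset (Perm (QS m)), S.card ≤ (2 ^ k).factorial ∧
      ∀ p : Perm (QS m), p.support.card ≤ k → ∃ q ∈ S, AffEquiv p q := by
  classical
  let U := span (ZMod 2)
    (Set.range (Pi.basisFun (ZMod 2) (Fin m) ∘ Fin.castLE (min_le_right k m)))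
  have hU : finrank (ZMod 2) U = min k m := by
    simpa using finrank_span_basisFun_comp (R := ZMod 2) (Fin.castLE_injective (min_le_right k m))
  obtain ⟨S, hS, hmem⟩ := Perm.exists_finset_supported_card_le (· ∈ U)
  refine ⟨S, hS.trans (Nat.factorial_le ?_), fun p hk => ?_⟩
  · rw [card_eq_pow_finrank (K := ZMod 2), ZMod.card, hU]
    exact Nat.pow_le_pow_right two_pos (min_le_left k m)
  · have hdim : finrank (ZMod 2) (span (ZMod 2) (p.support : Set (QS m))) ≤ finrank (ZMod 2) U :=
      hU ▸ le_min ((finrank_span_finset_le_card _).trans hk)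
        ((Submodule.finrank_le _).trans_eq (finrank_fin_fun _))
    obtain ⟨q, hpq, hq⟩ := exists_affEquiv_support_sub_mem p hdim 0
    exact ⟨q, hmem q fun x hx => by simpa using hq x hx, hpq⟩

theorem exists_affEquiv_forall_apply_eq_zero_fixed (p : Perm (QS m)) (hp : p.support.card < m)
    (j : Fin m) : ∃ q : Perm (QS m), AffEquiv p q ∧ ∀ x : QS m, x j = 0 → q x = x := by
  obtain ⟨n, rfl⟩ : ∃ n, m = n + 1 := Nat.exists_eq_add_one.mpr (by omega)
  let g := j.succAbove ∘ Fin.castLE (Nat.lt_succ_iff.mp hp)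
  have hdim : finrank (ZMod 2) (span (ZMod 2) (p.support : Set (QS (n + 1)))) ≤
      finrank (ZMod 2) (span (ZMod 2) (Set.range (Pi.basisFun (ZMod 2) (Fin (n + 1)) ∘ g))) := by
    rw [finrank_span_basisFun_comp (Fin.succAbove_right_injective.comp (Fin.castLE_injective _)),
      Fintype.card_fin]
    exact finrank_span_finset_le_card _
  obtain ⟨q, hpq, hq⟩ := exists_affEquiv_support_sub_mem p hdim (Pi.single j 1)
  refine ⟨q, hpq, fun x hx => ?_⟩
  by_contra hne
  have := apply_eq_zero_of_mem_span_basisFun_comp (hq x (Perm.mem_support.mpr hne)) (j := j)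
    (by rintro ⟨i, hi⟩; exact Fin.succAbove_ne j _ hi)
  simp [hx] at this

/-- for every k there are only finitely many affine equivalence
classes of permutations of F₂ᵐ that are a single k-cycle, uniformly in m; and
for m > k every such permutation is affine equivalent to a controlled
permutation (control on the first qubit). -/
theorem finitely_many_cycle_classes (k : ℕ) :
    (∃ N : ℕ, ∀ m : ℕ, ∃ S : Finset (Equiv.Perm (QS m)),
      S.card ≤ N ∧
      ∀ p : Equiv.Perm (QS m), p.IsCycle → p.support.card = k →
        ∃ q ∈ S, AffEquiv p q) ∧
    (∀ (m : ℕ) (hm : k < m) (p : Equiv.Perm (QS m)),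
      p.IsCycle → p.support.card = k →
      ∃ q : Equiv.Perm (QS m), AffEquiv p q ∧
        ∀ x : QS m,
          x ⟨0, Nat.lt_of_le_of_lt (Nat.zero_le k) hm⟩ = 0 → q x = x) := by
  refine ⟨⟨(2 ^ k).factorial, fun m => ?_⟩, fun m hm p _ hk => ?_⟩
  · obtain ⟨S, hS, hmem⟩ := exists_finset_forall_affEquiv_of_card_support_le k m
    exact ⟨S, hS, fun p _ hk => hmem p hk.le⟩
  · exact exists_affEquiv_forall_apply_eq_zero_fixed p (hk ▸ hm) _
end

section
/- Every 0-wire-mismatch permutation gate is in the Clifford Hierarchy: if a permutation gate on n qubits can be written as a finite product of multi-controlled-NOT gates such that every wire carries only targets or only controls (never both), then all the constituent gates pairwise commute and their product lies in some finite level of the Clifford Hierarchy. -/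
noncomputable section

namespace CHPaper

/-- The action of a multi-controlled NOT with target t, control set S, and
control polarities p: flip bit t when every control bit matches its polarity. -/
def mcxFun {n : ℕ} (t : Fin n) (S : Finset (Fin n)) (p : QState n)
    (x : QState n) : QState n :=
  if ∀ i ∈ S, x i = p i then Function.update x t (x t + 1) else x

/-- The matrix of a multi-controlled NOT gate. -/
def mcxMat {n : ℕ} (t : Fin n) (S : Finset (Fin n)) (p : QState n) : QMat n :=
  Matrix.of fun x y => if x = mcxFun t S p y then (1 : ℂ) else 0

/-!
If no wire carries both a target and a control, each gate acts on basis states as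
`y ↦ y + f_g y`, where `f_g` is supported on target wires and depends only on control wires.
Hence the gates commute and their product is `y ↦ y + f y` with `f (a + f b) = f a`.

More generally, let `W` send `|y⟩` to `(-1)^(h y) |y + g y⟩`, where `g` and `h` are invariant
under translation by values of `g`. Then `W` is a self-adjoint unitary, and
`W X^v Z^w W = X^v Z^w W'` with `W'` of the same kind, built from `Δ_v g` and
`Δ_v h + w ⬝ g (· + v)`. These have lower degree in the sense of forward differences, so induction
on the degree puts `W` in the Clifford Hierarchy; every function on `𝔽₂ⁿ` has degree at most `n`.
-/

open fwdDiff Matrix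

section Degree

variable (M R : Type*) [AddCommMonoid M] [CommRing R]

def fwdDiffLinear (h : M) : (M → R) →ₗ[R] (M → R) where
  toFun := fwdDiff h
  map_add' := fwdDiff_add h
  map_smul' := fwdDiff_const_smul h

def degLT : ℕ → Submodule R (M → R)
  | 0 => ⊥
  | d + 1 => ⨅ h : M, (degLT d).comap (fwdDiffLinear M R h)

variable {M R}

theorem mem_degLT_zero {q : M → R} : q ∈ degLT M R 0 ↔ q = 0 := Submodule.mem_bot R

theorem mem_degLT_succ {d : ℕ} {q : M → R} :
    q ∈ degLT M R (d + 1) ↔ ∀ h, Δ_[h] q ∈ degLT M R d := by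
  simp [degLT, Submodule.mem_iInf, fwdDiffLinear]

theorem mem_degLT_one {q : M → R} : q ∈ degLT M R 1 ↔ ∀ y, q y = q 0 := by
  simp only [mem_degLT_succ, mem_degLT_zero, funext_iff, fwdDiff, Pi.zero_apply, sub_eq_zero]
  refine ⟨fun H y => by simpa using H y 0, fun H h y => by rw [H, H y]⟩

theorem degLT_monotone : Monotone (degLT M R) := by
  refine monotone_nat_of_le_succ fun d => ?_
  induction d with
  | zero => exact bot_le
  | succ d ih => exact fun q hq => mem_degLT_succ.2 fun h => ih (mem_degLT_succ.1 hq h)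

theorem const_mem_degLT (c : R) {d : ℕ} : (fun _ => c : M → R) ∈ degLT M R (d + 1) :=
  degLT_monotone (Nat.le_add_left 1 d) (mem_degLT_one.2 fun _ => rfl)

theorem comp_add_mem_degLT {d : ℕ} {q : M → R} (hq : q ∈ degLT M R d) (m : M) :
    (fun y => q (y + m)) ∈ degLT M R d := by
  induction d generalizing q with
  | zero => rw [mem_degLT_zero.1 hq]; exact zero_mem _
  | succ d ih =>
    refine mem_degLT_succ.2 fun h => ?_
    rw [show Δ_[h] (fun y => q (y + m)) = fun y => Δ_[h] q (y + m) from
      funext (fwdDiff_comp_add h q m)]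
    exact ih (mem_degLT_succ.1 hq h)

theorem exists_addMonoidHom_of_mem_degLT_two {p : M → R} (hp : p ∈ degLT M R 2) :
    ∃ φ : M →+ R, ∀ y, p y = p 0 + φ y := by
  have hΔ : ∀ h y, p (y + h) - p y = p h - p 0 := fun h y => by
    simpa [fwdDiff] using mem_degLT_one.1 (mem_degLT_succ.1 hp h) y
  refine ⟨AddMonoidHom.mk' (fun y => p y - p 0) fun a b => ?_, fun y => by simp⟩
  linear_combination hΔ b a

theorem mul_mem_degLT {p q : M → R} {d : ℕ} (hp : p ∈ degLT M R 2) (hq : q ∈ degLT M R d) :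
    p * q ∈ degLT M R (d + 1) := by
  induction d generalizing q with
  | zero => rw [mem_degLT_zero.1 hq, mul_zero]; exact zero_mem _
  | succ d ih =>
    refine mem_degLT_succ.2 fun h => ?_
    have hΔq := mem_degLT_succ.1 hq h
    set c := Δ_[h] p 0
    have hc : ∀ y, p (y + h) - p y = c := mem_degLT_one.1 (mem_degLT_succ.1 hp h)
    have : Δ_[h] (p * q) = c • q + p * Δ_[h] q + c • Δ_[h] q := by
      ext y
      simp only [fwdDiff, Pi.add_apply, Pi.mul_apply, Pi.smul_apply, smul_eq_mul]
      linear_combination q (y + h) * hc y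
    rw [this]
    exact add_mem (add_mem (Submodule.smul_mem _ c hq) (ih hΔq))
      (Submodule.smul_mem _ c (degLT_monotone d.le_succ hΔq))

end Degree

theorem degLT_boolean_eq_top (n : ℕ) : degLT (Fin n → ZMod 2) (ZMod 2) (n + 1) = ⊤ := by
  refine eq_top_iff.2 fun q _ => ?_
  have hfactor : ∀ (i : Fin n) (c : ZMod 2),
      (fun y : Fin n → ZMod 2 => y i + c) ∈ degLT _ (ZMod 2) 2 := fun i c =>
    mem_degLT_succ.2 fun h => mem_degLT_one.2 fun y => by simp [fwdDiff]
  have hprod : ∀ (z : Fin n → ZMod 2) (s : Finset (Fin n)),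
      (fun y : Fin n → ZMod 2 => ∏ i ∈ s, (y i + (z i + 1))) ∈ degLT _ (ZMod 2) (s.card + 1) := by
    intro z s
    induction s using Finset.induction with
    | empty => simpa using const_mem_degLT (M := Fin n → ZMod 2) (1 : ZMod 2) (d := 0)
    | insert a s ha ih =>
      rw [Finset.card_insert_of_notMem ha]
      simp only [Finset.prod_insert ha]
      exact mul_mem_degLT (hfactor a (z a + 1)) ih
  have hδ : ∀ z y : Fin n → ZMod 2, ∏ i, (y i + (z i + 1)) = if y = z then 1 else 0 := by
    intro z y
    have hbit : ∀ a b : ZMod 2, a + (b + 1) = if a = b then 1 else 0 := by decide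
    simp only [hbit, Finset.prod_boole, funext_iff, Finset.mem_univ, true_implies]
  have hq : q = ∑ z, q z • fun y => ∏ i, (y i + (z i + 1)) := by
    ext y
    simp [hδ]
  rw [hq]
  exact Submodule.sum_mem _ fun z _ => Submodule.smul_mem _ _ (by
    simpa using hprod z Finset.univ)

theorem exists_dotProduct_of_mem_degLT_two {n : ℕ} {p : (Fin n → ZMod 2) → ZMod 2}
    (hp : p ∈ degLT _ (ZMod 2) 2) : ∃ w, ∀ y, p y = p 0 + w ⬝ᵥ y := by
  obtain ⟨φ, hφ⟩ := exists_addMonoidHom_of_mem_degLT_two hp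
  refine ⟨fun i => φ fun j => if i = j then 1 else 0, fun y => ?_⟩
  rw [hφ, ← φ.coe_toZModLinearMap 2, LinearMap.pi_apply_eq_sum_univ]
  simp [dotProduct, mul_comm]

theorem fwdDiff_eq_add {M : Type*} [AddCommMonoid M] (v : M) (q : M → ZMod 2) :
    Δ_[v] q = fun y => q (y + v) + q y :=
  funext fun _ => ZModModule.sub_eq_add _ _

section Monomial

variable {ι R : Type*} [DecidableEq ι]

-- The matrix sending `|y⟩` to `c y • |φ y⟩`.
def monomialMat [Zero R] (φ : ι → ι) (c : ι → R) : Matrix ι ι R :=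
  Matrix.of fun x y => if x = φ y then c y else 0

theorem monomialMat_mul [Fintype ι] [NonUnitalNonAssocSemiring R] (φ ψ : ι → ι) (c d : ι → R) :
    monomialMat φ c * monomialMat ψ d = monomialMat (φ ∘ ψ) fun y => c (ψ y) * d y := by
  ext x y
  simp only [monomialMat, mul_apply, of_apply, Function.comp_apply]
  rw [Finset.sum_eq_single (ψ y) (fun z _ hz => by simp [hz]) (by simp)]
  simp

theorem monomialMat_id_one [Zero R] [One R] : monomialMat (id : ι → ι) (fun _ => (1 : R)) = 1 := by
  ext x y
  simp [monomialMat, one_apply]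

theorem smul_monomialMat [MulZeroClass R] (r : R) (φ : ι → ι) (c : ι → R) :
    r • monomialMat φ c = monomialMat φ fun y => r * c y := by
  ext x y
  simp [monomialMat]

theorem star_monomialMat [Semiring R] [StarRing R] {φ : ι → ι} (hφ : Function.Involutive φ)
    (c : ι → R) : star (monomialMat φ c) = monomialMat φ fun y => star (c (φ y)) := by
  ext x y
  simp only [star_apply, monomialMat, of_apply]
  by_cases h : x = φ y
  · rw [if_pos (by rw [h, hφ]), if_pos h, h]
  · rw [if_neg (fun h' => h (by rw [h', hφ])), if_neg h, star_zero]

theorem monomialMat_mem_unitaryGroup [Fintype ι] [CommRing R] [StarRing R] {φ : ι → ι}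
    (hφ : Function.Involutive φ) {c : ι → R} (hc : ∀ y, c y * star (c y) = 1) :
    monomialMat φ c ∈ unitaryGroup ι R := by
  rw [mem_unitaryGroup_iff, star_monomialMat hφ, monomialMat_mul, ← monomialMat_id_one]
  congr 1
  · exact funext hφ
  · exact funext fun y => hc (φ y)

end Monomial

section Pauli

variable {n : ℕ}

def sgn (a : ZMod 2) : ℂ := (-1) ^ a.val

theorem sgn_zero : sgn 0 = 1 := by simp [sgn]

theorem sgn_add (a b : ZMod 2) : sgn (a + b) = sgn a * sgn b := by
  rw [sgn, sgn, sgn, ZMod.val_add, ← neg_one_pow_eq_pow_mod_two, pow_add]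

theorem sgn_mul_self (a : ZMod 2) : sgn a * sgn a = 1 := by
  rw [← sgn_add, ZModModule.add_self, sgn_zero]

theorem sgn_pow_four (a : ZMod 2) : sgn a ^ 4 = 1 := by
  rw [show sgn a ^ 4 = (sgn a * sgn a) ^ 2 by ring, sgn_mul_self, one_pow]

theorem star_sgn (a : ZMod 2) : star (sgn a) = sgn a := by simp [sgn]

theorem mul_star_self_of_pow_four_eq_one {c : ℂ} (hc : c ^ 4 = 1) : c * star c = 1 := by
  have hnorm : ‖c‖ = 1 :=
    (pow_eq_one_iff_of_nonneg (norm_nonneg c) four_ne_zero).1 (by rw [← norm_pow, hc, norm_one])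
  rw [Complex.star_def, Complex.mul_conj', hnorm]
  norm_num

theorem involutive_add_right (v : QState n) : Function.Involutive (· + v) := fun y => by
  simp only [add_assoc, ZModModule.add_self, add_zero]

theorem XStr_mul_ZStr (v w : QState n) :
    XStr v * ZStr w = monomialMat (· + v) fun y => sgn (w ⬝ᵥ y) := by
  have hZ : ZStr w = monomialMat id fun y => sgn (w ⬝ᵥ y) := by
    ext x y
    simp only [ZStr, monomialMat, diagonal_apply, of_apply, id]
    split_ifs <;> simp_all [sgn, dotProduct]
  rw [hZ, show XStr v = monomialMat (· + v) fun _ => 1 from rfl, monomialMat_mul]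
  simp

theorem XStr_mul_ZStr_mem_pauli (v w : QState n) : XStr v * ZStr w ∈ Pauli n :=
  ⟨1, v, w, one_pow 4, (one_smul ℂ _).symm⟩

theorem smul_mem_pauli {c : ℂ} (hc : c ^ 4 = 1) {P : QMat n} (hP : P ∈ Pauli n) :
    c • P ∈ Pauli n := by
  obtain ⟨c', v, w, hc', rfl⟩ := hP
  exact ⟨c * c', v, w, by rw [mul_pow, hc, hc', one_mul], smul_smul c c' _⟩

theorem mul_mem_pauli {P Q : QMat n} (hP : P ∈ Pauli n) (hQ : Q ∈ Pauli n) :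
    P * Q ∈ Pauli n := by
  obtain ⟨c₁, v₁, w₁, hc₁, rfl⟩ := hP
  obtain ⟨c₂, v₂, w₂, hc₂, rfl⟩ := hQ
  refine ⟨c₁ * c₂ * sgn (w₁ ⬝ᵥ v₂), v₂ + v₁, w₁ + w₂, ?_, ?_⟩
  · rw [mul_pow, mul_pow, hc₁, hc₂, sgn_pow_four, one_mul, one_mul]
  · simp only [XStr_mul_ZStr, smul_monomialMat, monomialMat_mul]
    congr 1
    · exact funext fun y => add_assoc y v₂ v₁
    · funext y
      simp only [dotProduct_add, add_dotProduct, sgn_add]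
      ring

theorem star_mem_pauli {P : QMat n} (hP : P ∈ Pauli n) : star P ∈ Pauli n := by
  obtain ⟨c, v, w, hc, rfl⟩ := hP
  refine ⟨star c * sgn (w ⬝ᵥ v), v, w, ?_, ?_⟩
  · rw [mul_pow, sgn_pow_four, ← star_pow, hc, star_one, one_mul]
  · simp only [XStr_mul_ZStr, smul_monomialMat]
    rw [star_monomialMat (involutive_add_right v)]
    congr 1
    funext y
    simp only [star_mul', star_sgn, dotProduct_add, sgn_add]
    ring

theorem mem_unitaryGroup_of_mem_pauli {P : QMat n} (hP : P ∈ Pauli n) :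
    P ∈ unitaryGroup (QState n) ℂ := by
  obtain ⟨c, v, w, hc, rfl⟩ := hP
  rw [XStr_mul_ZStr, smul_monomialMat]
  refine monomialMat_mem_unitaryGroup (involutive_add_right v) fun y => ?_
  rw [star_mul', star_sgn, mul_mul_mul_comm, mul_star_self_of_pow_four_eq_one hc, sgn_mul_self,
    one_mul]

theorem pauli_mul_mem_CH {k : ℕ} {P M : QMat n} (hP : P ∈ Pauli n) (hM : M ∈ CH n (k + 1)) :
    P * M ∈ CH n (k + 1) ∧ M * P ∈ CH n (k + 1) := by
  induction k generalizing P M with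
  | zero => exact ⟨mul_mem_pauli hP hM, mul_mem_pauli hM hP⟩
  | succ k ih =>
    obtain ⟨hMu, hMconj⟩ := hM
    have hPu := mem_unitaryGroup_of_mem_pauli hP
    refine ⟨⟨mul_mem hPu hMu, fun Q hQ => ?_⟩, ⟨mul_mem hMu hPu, fun Q hQ => ?_⟩⟩
    · rw [star_mul, show P * M * Q * (star M * star P) = P * (M * Q * star M) * star P by
        noncomm_ring]
      exact (ih (star_mem_pauli hP) (ih hP (hMconj Q hQ)).1).2
    · rw [star_mul, show M * P * Q * (star P * star M) = M * (P * Q * star P) * star M by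
        noncomm_ring]
      exact hMconj _ (mul_mem_pauli (mul_mem_pauli hP hQ) (star_mem_pauli hP))

end Pauli

section SignedShift

variable {n : ℕ} {g : QState n → QState n} {h : QState n → ZMod 2}

def signedShift (g : QState n → QState n) (h : QState n → ZMod 2) : QMat n :=
  monomialMat (fun y => y + g y) fun y => sgn (h y)

theorem involutive_id_add (hg : ∀ a b, g (a + g b) = g a) :
    Function.Involutive fun y => y + g y := fun y => by
  simp only [hg, add_assoc, ZModModule.add_self, add_zero]

theorem star_signedShift (hg : ∀ a b, g (a + g b) = g a) (hh : ∀ a b, h (a + g b) = h a) :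
    star (signedShift g h) = signedShift g h := by
  rw [signedShift, star_monomialMat (involutive_id_add hg)]
  simp only [hh, star_sgn]

theorem signedShift_mem_unitaryGroup (hg : ∀ a b, g (a + g b) = g a) :
    signedShift g h ∈ unitaryGroup (QState n) ℂ :=
  monomialMat_mem_unitaryGroup (involutive_id_add hg) fun y => by
    rw [star_sgn, sgn_mul_self]

theorem signedShift_mul_XStr_mul_ZStr_mul_signedShift (hg : ∀ a b, g (a + g b) = g a)
    (hh : ∀ a b, h (a + g b) = h a) (v w : QState n) :
    signedShift g h * (XStr v * ZStr w) * signedShift g h =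
      XStr v * ZStr w * signedShift (fun y => g y + g (y + v))
        (fun y => w ⬝ᵥ g (y + v) + (h (y + v) + h y)) := by
  have hcomm : ∀ y, y + g y + v = y + v + g y := fun y => add_right_comm y (g y) v
  simp only [XStr_mul_ZStr, signedShift, monomialMat_mul]
  congr 1 <;> funext y <;> simp only [Function.comp_apply, hcomm, hg, hh]
  · abel
  · simp only [← sgn_add, dotProduct_add]
    congr 1
    linear_combination (-(w ⬝ᵥ g (y + v))) * ZModModule.add_self (1 : ZMod 2)

theorem dotProduct_comp_add_mem_degLT {d : ℕ}
    (hgdeg : ∀ i, (fun y => g y i) ∈ degLT (QState n) (ZMod 2) d) (w v : QState n) :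
    (fun y => w ⬝ᵥ g (y + v)) ∈ degLT (QState n) (ZMod 2) d := by
  have hsum : (fun y => w ⬝ᵥ g (y + v)) = ∑ j, w j • fun y => g (y + v) j := by
    funext y
    simp [dotProduct]
  rw [hsum]
  exact Submodule.sum_mem _ fun j _ => Submodule.smul_mem _ _ (comp_add_mem_degLT (hgdeg j) v)

theorem signedShift_mem_CH {d : ℕ} (hg : ∀ a b, g (a + g b) = g a)
    (hh : ∀ a b, h (a + g b) = h a)
    (hgdeg : ∀ i, (fun y => g y i) ∈ degLT (QState n) (ZMod 2) (d + 1))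
    (hhdeg : h ∈ degLT (QState n) (ZMod 2) (d + 2)) :
    signedShift g h ∈ CH n (d + 1) := by
  induction d generalizing g h with
  | zero =>
    obtain ⟨w, hw⟩ := exists_dotProduct_of_mem_degLT_two hhdeg
    refine ⟨sgn (h 0), g 0, w, sgn_pow_four _, ?_⟩
    rw [XStr_mul_ZStr, smul_monomialMat, signedShift]
    congr 1 <;> funext y
    · rw [show g y = g 0 from funext fun i => mem_degLT_one.1 (hgdeg i) y]
    · rw [hw, sgn_add]
  | succ d ih =>
    refine ⟨signedShift_mem_unitaryGroup hg, ?_⟩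
    rintro _ ⟨c, v, w, hc, rfl⟩
    rw [star_signedShift hg hh, mul_smul_comm, smul_mul_assoc,
      signedShift_mul_XStr_mul_ZStr_mul_signedShift hg hh, ← smul_mul_assoc]
    refine (pauli_mul_mem_CH (smul_mem_pauli hc (XStr_mul_ZStr_mem_pauli v w))
      (ih ?_ ?_ (fun i => ?_) ?_)).1
    · intro a b
      simp only [← add_assoc, hg, add_right_comm _ (g b) v, add_right_comm _ (g (b + v)) v]
    · intro a b
      simp only [← add_assoc, hg, hh, add_right_comm _ (g b) v, add_right_comm _ (g (b + v)) v]
    · simpa only [fwdDiff_eq_add, Pi.add_apply, add_comm] using mem_degLT_succ.1 (hgdeg i) v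
    · have hΔh := mem_degLT_succ.1 hhdeg v
      rw [fwdDiff_eq_add] at hΔh
      exact add_mem (dotProduct_comp_add_mem_degLT hgdeg w v) hΔh

end SignedShift

section MultiControlledNot

variable {n : ℕ}

def controlledFlip (t : Fin n) (S : Finset (Fin n)) (p x : QState n) : QState n :=
  if ∀ i ∈ S, x i = p i then Pi.single t 1 else 0

theorem mcxFun_eq_add_controlledFlip (t : Fin n) (S : Finset (Fin n)) (p x : QState n) :
    mcxFun t S p x = x + controlledFlip t S p x := by
  unfold mcxFun controlledFlip
  split_ifs
  · ext j
    rcases eq_or_ne j t with rfl | hne <;> simp [*]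
  · simp

theorem controlledFlip_apply_of_ne {t i : Fin n} (hi : i ≠ t) (S : Finset (Fin n))
    (p x : QState n) : controlledFlip t S p x i = 0 := by
  unfold controlledFlip
  split_ifs <;> simp [hi]

theorem controlledFlip_add_of_vanishing {S : Finset (Fin n)} {z : QState n}
    (hz : ∀ i ∈ S, z i = 0) (t : Fin n) (p x : QState n) :
    controlledFlip t S p (x + z) = controlledFlip t S p x := by
  simp only [controlledFlip, Pi.add_apply]
  congr 1
  exact propext (forall₂_congr fun i hi => by rw [hz i hi, add_zero])

theorem mcxMat_eq_monomialMat (t : Fin n) (S : Finset (Fin n)) (p : QState n) :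
    mcxMat t S p = monomialMat (mcxFun t S p) fun _ => 1 := rfl

theorem mcxMat_mul_comm {t₁ t₂ : Fin n} {S₁ S₂ : Finset (Fin n)} (h₁ : t₁ ∉ S₂) (h₂ : t₂ ∉ S₁)
    (p₁ p₂ : QState n) :
    mcxMat t₁ S₁ p₁ * mcxMat t₂ S₂ p₂ = mcxMat t₂ S₂ p₂ * mcxMat t₁ S₁ p₁ := by
  have hcomm : mcxFun t₁ S₁ p₁ ∘ mcxFun t₂ S₂ p₂ = mcxFun t₂ S₂ p₂ ∘ mcxFun t₁ S₁ p₁ := by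
    funext y
    simp only [Function.comp_apply, mcxFun_eq_add_controlledFlip]
    rw [controlledFlip_add_of_vanishing
        (fun i hi => controlledFlip_apply_of_ne (ne_of_mem_of_not_mem hi h₂) _ _ _),
      controlledFlip_add_of_vanishing
        (fun i hi => controlledFlip_apply_of_ne (ne_of_mem_of_not_mem hi h₁) _ _ _)]
    abel
  simp only [mcxMat_eq_monomialMat, monomialMat_mul, hcomm]

def totalFlip (L : List (Fin n × Finset (Fin n) × QState n)) (y : QState n) : QState n :=
  (L.map fun g => controlledFlip g.1 g.2.1 g.2.2 y).sum

theorem totalFlip_apply_of_forall_ne {L : List (Fin n × Finset (Fin n) × QState n)} {i : Fin n}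
    (hi : ∀ g ∈ L, i ≠ g.1) (y : QState n) : totalFlip L y i = 0 := by
  induction L with
  | nil => rfl
  | cons g L ih =>
    simp only [totalFlip, List.map_cons, List.sum_cons, Pi.add_apply] at ih ⊢
    rw [controlledFlip_apply_of_ne (hi g List.mem_cons_self),
      ih fun g' hg' => hi g' (List.mem_cons_of_mem g hg'), add_zero]

theorem totalFlip_add_of_vanishing {L : List (Fin n × Finset (Fin n) × QState n)} {z : QState n}
    (hz : ∀ g ∈ L, ∀ i ∈ g.2.1, z i = 0) (y : QState n) :
    totalFlip L (y + z) = totalFlip L y :=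
  congrArg List.sum (List.map_congr_left fun g hg =>
    controlledFlip_add_of_vanishing (hz g hg) _ _ _)

theorem totalFlip_add_totalFlip {L : List (Fin n × Finset (Fin n) × QState n)}
    (hL : ∀ g ∈ L, ∀ h ∈ L, g.1 ∉ h.2.1) (a b : QState n) :
    totalFlip L (a + totalFlip L b) = totalFlip L a :=
  totalFlip_add_of_vanishing (fun g hg _ hi =>
    totalFlip_apply_of_forall_ne (fun g' hg' hig' => hL g' hg' g hg (hig' ▸ hi)) b) a

theorem prod_mcxMat_eq_signedShift {L : List (Fin n × Finset (Fin n) × QState n)}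
    (hL : ∀ g ∈ L, ∀ h ∈ L, g.1 ∉ h.2.1) :
    (L.map fun g => mcxMat g.1 g.2.1 g.2.2).prod = signedShift (totalFlip L) 0 := by
  induction L with
  | nil =>
    rw [List.map_nil, List.prod_nil, ← monomialMat_id_one, signedShift]
    congr 1
    funext y
    simp [totalFlip]
  | cons g L ih =>
    have hsub : ∀ g' ∈ L, ∀ h ∈ L, g'.1 ∉ h.2.1 := fun g' hg' h hh =>
      hL g' (List.mem_cons_of_mem g hg') h (List.mem_cons_of_mem g hh)
    rw [List.map_cons, List.prod_cons, ih hsub, mcxMat_eq_monomialMat, signedShift,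
      monomialMat_mul]
    congr 1 <;> funext y
    · have hvanish : ∀ i ∈ g.2.1, totalFlip L y i = 0 := fun i hi =>
        totalFlip_apply_of_forall_ne (fun g' hg' hig' =>
          hL g' (List.mem_cons_of_mem g hg') g List.mem_cons_self (hig' ▸ hi)) y
      rw [Function.comp_apply, mcxFun_eq_add_controlledFlip,
        controlledFlip_add_of_vanishing hvanish]
      simp only [totalFlip, List.map_cons, List.sum_cons]
      abel
    · simp

end MultiControlledNot

/-- a permutation written as a product of multi-controlled NOTs
in which no wire carries both a target and a control (0-wire mismatch) has
pairwise commuting constituent gates, and the product lies in some finite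
level of the Clifford Hierarchy. -/
theorem zero_wire_mismatch_in_CH {n : ℕ}
    (L : List (Fin n × Finset (Fin n) × QState n))
    (hmm : ∀ g ∈ L, ∀ h ∈ L, g.1 ∉ h.2.1) :
    (∀ g ∈ L, ∀ h ∈ L,
      mcxMat g.1 g.2.1 g.2.2 * mcxMat h.1 h.2.1 h.2.2 =
        mcxMat h.1 h.2.1 h.2.2 * mcxMat g.1 g.2.1 g.2.2) ∧
    ∃ k : ℕ, (L.map fun g => mcxMat g.1 g.2.1 g.2.2).prod ∈ CH n k := by
  refine ⟨fun g hg h hh => mcxMat_mul_comm (hmm g hg h hh) (hmm h hh g hg) _ _, n + 1, ?_⟩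
  rw [prod_mcxMat_eq_signedShift hmm]
  exact signedShift_mem_CH (totalFlip_add_totalFlip hmm) (fun _ _ => rfl)
    (fun _ => degLT_boolean_eq_top n ▸ Submodule.mem_top) (zero_mem _)
end CHPaper
end
end
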